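/- The group homomorphism from the free product of four copies of the cyclic group of order 2 into GL(4,ℝ), sending the generator of the i-th free factor to the matrix S_i, is injective. Equivalently, the Apollonian group A = ⟨S_1,S_2,S_3,S_4⟩ has the presentation with the relations S_i² = I only: every product S_{i_1}·S_{i_2}·⋯·S_{i_n} with n ≥ 1 and i_j ≠ i_{j+1} for all j is different from the identity, and distinct such reduced words give distinct group elements. -/

import Mathlib

open Matrix

/-- The Apollonian generators `S₁, S₂, S₃, S₄`. -/
noncomputable def S : Fin 4 → Matrix (Fin 4) (Fin 4) ℝ := fun i =>
  Matrix.of fun j k =>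
    if j = i then (if k = i then -1 else 2) else (if j = k then 1 else 0)

open Function

/-!
Ping-pong on the positive orthant of `ℝ⁴`. `S i` replaces the `i`-th coordinate of a vector `v` by
`2 (∑ v) - 3 vᵢ` and fixes the others. Let `Dᵢ` be the cone of positive vectors whose `i`-th
coordinate exceeds the sum of the others. These cones are pairwise disjoint, and for `i ≠ j`,
`S i` maps `Dⱼ` into `Dᵢ`: on `Dⱼ` we have `vᵢ < vⱼ`, so `2 vᵢ < ∑ v`, which is exactly what makes the
new `i`-th coordinate positive and dominant. The ping-pong lemma for free products then gives
injectivity.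
-/

section DominantCone

variable {ι : Type*} [Fintype ι]

def dominantCone (i : ι) : Set (ι → ℝ) :=
  {v | (∀ k, 0 < v k) ∧ ∑ k, v k < 2 * v i}

theorem pairwise_disjoint_dominantCone :
    Pairwise (Disjoint on (dominantCone : ι → Set (ι → ℝ))) := by
  intro i j hij
  refine Set.disjoint_left.2 fun v ⟨hpos, hi⟩ ⟨_, hj⟩ => ?_
  have := Finset.add_le_sum (fun k _ => (hpos k).le) (Finset.mem_univ i) (Finset.mem_univ j) hij
  linarith

variable [DecidableEq ι]

theorem dominantCone_nonempty (i : ι) : (dominantCone i).Nonempty := by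
  refine ⟨Pi.single i (Fintype.card ι : ℝ) + 1, fun k => ?_, ?_⟩
  · rw [Pi.add_apply, Pi.one_apply, Pi.single_apply]
    split_ifs <;> positivity
  · simp only [Pi.add_apply, Finset.sum_add_distrib, Finset.sum_pi_single', Finset.mem_univ,
      if_true, Pi.one_apply, Finset.sum_const, Finset.card_univ, nsmul_eq_mul, mul_one,
      Pi.single_eq_same]
    linarith

theorem update_mem_dominantCone {i j : ι} (hij : i ≠ j) {v : ι → ℝ} (hv : v ∈ dominantCone j) :
    update v i (2 * ∑ k, v k - 3 * v i) ∈ dominantCone i := by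
  obtain ⟨hpos, hj⟩ := hv
  have hsum_ij := Finset.add_le_sum (fun k _ => (hpos k).le) (Finset.mem_univ i)
    (Finset.mem_univ j) hij
  have hvi : 2 * v i < ∑ k, v k := by linarith
  have hrest : ∑ k ∈ Finset.univ \ {i}, v k = ∑ k, v k - v i := by
    rw [Finset.sum_eq_add_sum_sdiff_singleton_of_mem (Finset.mem_univ i)]
    ring
  refine ⟨fun k => ?_, ?_⟩
  · rcases eq_or_ne k i with rfl | hk
    · rw [update_self]
      linarith [hpos k]
    · rw [update_of_ne hk]
      exact hpos k
  · rw [Finset.sum_update_of_mem (Finset.mem_univ i), hrest, update_self]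
    linarith

end DominantCone

theorem S_mulVec (i : Fin 4) (v : Fin 4 → ℝ) :
    S i *ᵥ v = update v i (2 * ∑ k, v k - 3 * v i) := by
  ext j
  fin_cases i <;> fin_cases j <;>
    simp [S, mulVec, dotProduct, Fin.sum_univ_four] <;> ring

/-- The Apollonian group has the presentation `⟨S₁,S₂,S₃,S₄ | S i² = I⟩`: any
group homomorphism from the free product of four copies of the cyclic group of
order two into `GL(4, ℝ)` sending the generator of the `i`-th free factor to
`S i` is injective. Equivalently, every reduced word
`S i₁ · S i₂ ⋯ S iₙ` (with `n ≥ 1` and adjacent indices distinct) is not the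
identity, and distinct reduced words give distinct group elements. -/
theorem apollonian_group_free_product
    (φ : (Monoid.CoprodI fun _ : Fin 4 => Multiplicative (ZMod 2)) →* GL (Fin 4) ℝ)
    (hφ : ∀ i : Fin 4,
      (φ (Monoid.CoprodI.of (i := i) (Multiplicative.ofAdd (1 : ZMod 2))) :
        Matrix (Fin 4) (Fin 4) ℝ) = S i) :
    Function.Injective φ := by
  rw [← Monoid.CoprodI.lift.apply_symm_apply φ]
  refine Monoid.CoprodI.lift_injective_of_ping_pong _ (Or.inl (by norm_num)) dominantCone
    dominantCone_nonempty pairwise_disjoint_dominantCone ?_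
  rintro i j hij h hh _ ⟨v, hv, rfl⟩
  obtain rfl : h = Multiplicative.ofAdd 1 := by revert h; decide
  simpa [Units.smul_def, hφ, S_mulVec] using update_mem_dominantCone hij hv
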